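/- If a graph G is d-degenerate, then for every q ≥ d+1, all proper q-colourings of G are Kempe equivalent (i.e., there is a single Kempe class). -/

import Mathlib

open SimpleGraph

variable {V : Type*}

/-- Topological embedding of a simple graph in a space `S`. -/
def SimpleGraph.EmbedsIn (G : SimpleGraph V) (S : Type*) [TopologicalSpace S] : Prop :=
  ∃ (φ : V → S) (γ : ∀ u v, G.Adj u v → _root_.Path (φ u) (φ v)),
    Function.Injective φ ∧
    (∀ u v (h : G.Adj u v), Function.Injective (γ u v h : unitInterval → S)) ∧
    (∀ u v (h : G.Adj u v), γ v u h.symm = (γ u v h).symm) ∧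
    (∀ u v (h : G.Adj u v) (t : unitInterval),
        (γ u v h) t ∈ Set.range φ → t = 0 ∨ t = 1) ∧
    (∀ u v u' v' (h : G.Adj u v) (h' : G.Adj u' v') (t₁ t₂ : unitInterval),
        s(u, v) ≠ s(u', v') → (γ u v h) t₁ = (γ u' v' h') t₂ →
        (γ u v h) t₁ ∈ Set.range φ)

/-- The 2-sphere. -/
abbrev Sphere2 : Type := Metric.sphere (0 : EuclideanSpace ℝ (Fin 3)) 1

/-- The torus. -/
abbrev Torus2 : Type := AddCircle (1 : ℝ) × AddCircle (1 : ℝ)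

/-- `G` is `d`-degenerate: every nonempty (induced) subgraph has a vertex
of degree at most `d`. -/
def SimpleGraph.IsDegenerate (G : SimpleGraph V) (d : ℕ) : Prop :=
  ∀ s : Set V, s.Nonempty → ∃ v ∈ s, ({u ∈ s | G.Adj v u}).ncard ≤ d

/-- A proper colouring with `q` colours. -/
def SimpleGraph.IsProperColoring (G : SimpleGraph V) {q : ℕ} (c : V → Fin q) : Prop :=
  ∀ ⦃u v⦄, G.Adj u v → c u ≠ c v

/-- The subgraph of `G` induced by the vertices coloured `a` or `b`. -/
def SimpleGraph.kempeGraph (G : SimpleGraph V) {q : ℕ} (c : V → Fin q) (a b : Fin q) :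
    SimpleGraph V :=
  SimpleGraph.fromRel fun u v => G.Adj u v ∧ (c u = a ∨ c u = b) ∧ (c v = a ∨ c v = b)

/-- A Kempe move: swap colours `a` and `b` on the connected component of `v₀`
in the subgraph induced by the vertices coloured `a` or `b`. -/
def SimpleGraph.KempeStep (G : SimpleGraph V) {q : ℕ} (c₁ c₂ : V → Fin q) : Prop :=
  ∃ (a b : Fin q) (v₀ : V),
    (∀ v, (G.kempeGraph c₁ a b).Reachable v₀ v → c₂ v = Equiv.swap a b (c₁ v)) ∧
    (∀ v, ¬ (G.kempeGraph c₁ a b).Reachable v₀ v → c₂ v = c₁ v)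

/-- Kempe equivalence: a finite sequence of Kempe moves. -/
def SimpleGraph.KempeEquiv (G : SimpleGraph V) {q : ℕ} (c₁ c₂ : V → Fin q) : Prop :=
  Relation.ReflTransGen (G.KempeStep) c₁ c₂

/-! Induction on the graph. Delete the edges at a vertex `v` of degree less than `q`; the two
colourings are Kempe equivalent in the smaller graph, and each Kempe move there lifts to Kempe
moves of the whole graph with the same effect away from `v`. If `v` has at most one neighbour in
the two-coloured subgraph of the move, the same move works, since such a `v` cannot be the only
link between two vertices of its component. Otherwise two neighbours of `v` share a colour, so a
colour outside the two is missing around `v`, and recolouring `v` with it first reduces to the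
previous case. In the end the colourings differ only at `v`, and one more move fixes that. -/

theorem Set.exists_ne_notMem_image_of_ncard_lt {α : Type*} {N : Set α} (hN : N.Finite)
    {q : ℕ} {f : α → Fin q} (hcard : N.ncard < q) {x y : α} (hx : x ∈ N) (hy : y ∈ N)
    (hxy : x ≠ y) (hf : f x = f y) (a : Fin q) : ∃ η, η ≠ a ∧ η ∉ f '' N := by
  have himage : f '' N ⊆ f '' (N \ {y}) := by
    rintro _ ⟨u, hu, rfl⟩
    rcases eq_or_ne u y with rfl | huy
    exacts [⟨x, ⟨hx, hxy⟩, hf⟩, ⟨u, ⟨hu, huy⟩, rfl⟩]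
  have hsmall : (insert a (f '' N)).ncard < (univ : Set (Fin q)).ncard := calc
    (insert a (f '' N)).ncard ≤ (f '' (N \ {y})).ncard + 1 :=
      (ncard_insert_le _ _).trans <|
        Nat.add_le_add_right (ncard_le_ncard himage (hN.sdiff.image f)) 1
    _ ≤ (N \ {y}).ncard + 1 := Nat.add_le_add_right (ncard_image_le hN.sdiff) 1
    _ = N.ncard := by
      have := (ncard_pos hN).2 ⟨y, hy⟩
      rw [ncard_sdiff_singleton_of_mem hy]
      omega
    _ < _ := by simpa using hcard
  obtain ⟨η, -, hη⟩ := sdiff_nonempty_of_ncard_lt_ncard hsmall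
  exact ⟨η, fun h => hη (h ▸ mem_insert _ _), fun h => hη (mem_insert_of_mem _ h)⟩

namespace SimpleGraph

variable {q : ℕ} {G H : SimpleGraph V} {c c' : V → Fin q} {a b : Fin q} {u v w v₀ : V}

theorem kempeGraph_adj :
    (G.kempeGraph c a b).Adj u w ↔ G.Adj u w ∧ (c u = a ∨ c u = b) ∧ (c w = a ∨ c w = b) := by
  simp only [kempeGraph, fromRel_adj]
  constructor
  · rintro ⟨-, h | ⟨h, hw, hu⟩⟩
    exacts [h, ⟨h.symm, hu, hw⟩]
  · exact fun h => ⟨h.1.ne, .inl h⟩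

theorem kempeGraph_deleteIncidenceSet :
    (G.deleteIncidenceSet v).kempeGraph c a b = (G.kempeGraph c a b).deleteIncidenceSet v := by
  ext x y
  simp only [kempeGraph_adj, deleteIncidenceSet_adj]
  tauto

theorem Reachable.eq_of_forall_not_adj (h : G.Reachable v u) (hv : ∀ w, ¬ G.Adj v w) : u = v := by
  rw [reachable_iff_reflTransGen] at h
  rcases h.cases_head with h | ⟨w, hw, -⟩
  exacts [h.symm, (hv w hw).elim]

theorem reachable_deleteIncidenceSet_iff_of_forall_adj_eq (hleaf : ∀ x, G.Adj v x → x = w)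
    (hv₀ : v₀ ≠ v) (hu : u ≠ v) : (G.deleteIncidenceSet v).Reachable v₀ u ↔ G.Reachable v₀ u := by
  classical
  refine ⟨fun h => h.mono (deleteIncidenceSet_le G v), fun h => ?_⟩
  rw [reachable_iff_reflTransGen] at h
  -- a walk through `v` enters and leaves it through `w`, so it can be shortcut at `w`
  suffices ∀ x, Relation.ReflTransGen G.Adj v₀ x →
      (G.deleteIncidenceSet v).Reachable v₀ (if x = v then w else x) by
    simpa [hu] using this u h
  intro x hx
  induction hx with
  | refl => simp [hv₀]
  | @tail y x _ hyx ih =>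
    by_cases hx : x = v
    · subst hx
      obtain rfl := hleaf y hyx.symm
      simpa [hyx.ne] using ih
    by_cases hy : y = v
    · subst hy
      obtain rfl := hleaf x hyx
      simpa [hx] using ih
    simp only [hx, hy, if_false] at ih ⊢
    exact ih.trans (deleteIncidenceSet_adj.2 ⟨hyx, hy, hx⟩).reachable

open scoped Classical in
noncomputable def kempeSwap (G : SimpleGraph V) (c : V → Fin q) (a b : Fin q) (v₀ : V) :
    V → Fin q :=
  fun u => if (G.kempeGraph c a b).Reachable v₀ u then Equiv.swap a b (c u) else c u

theorem kempeStep_kempeSwap : G.KempeStep c (G.kempeSwap c a b v₀) :=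
  ⟨a, b, v₀, fun _ hu => if_pos hu, fun _ hu => if_neg hu⟩

theorem KempeStep.exists_eq_kempeSwap (h : G.KempeStep c c') :
    ∃ a b v₀, c' = G.kempeSwap c a b v₀ := by
  obtain ⟨a, b, v₀, hswap, hfix⟩ := h
  refine ⟨a, b, v₀, funext fun u => ?_⟩
  unfold kempeSwap
  split_ifs with hu
  exacts [hswap u hu, hfix u hu]

theorem IsProperColoring.mono (hc : G.IsProperColoring c) (h : H ≤ G) : H.IsProperColoring c :=
  fun _ _ huw => hc (h huw)

theorem IsProperColoring.update [DecidableEq V] (hc : G.IsProperColoring c) {η : Fin q}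
    (hη : ∀ u, G.Adj v u → c u ≠ η) : G.IsProperColoring (Function.update c v η) := by
  intro x y hxy
  rcases eq_or_ne x v with rfl | hx
  · simpa [hxy.ne'] using (hη y hxy).symm
  rcases eq_or_ne y v with rfl | hy
  · simpa [hx] using hη x hxy.symm
  simpa [hx, hy] using hc hxy

theorem IsProperColoring.kempeSwap (hc : G.IsProperColoring c) :
    G.IsProperColoring (G.kempeSwap c a b v₀) := by
  have across : ∀ ⦃x y⦄, G.Adj x y → (G.kempeGraph c a b).Reachable v₀ x →
      ¬ (G.kempeGraph c a b).Reachable v₀ y → Equiv.swap a b (c x) ≠ c y := by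
    intro x y hxy hx hy
    have hab : ¬ ((c x = a ∨ c x = b) ∧ (c y = a ∨ c y = b)) := fun h =>
      hy (hx.trans (kempeGraph_adj.2 ⟨hxy, h⟩).reachable)
    have := hc hxy
    rw [Equiv.swap_apply_def]
    split_ifs <;> grind
  intro x y hxy
  unfold SimpleGraph.kempeSwap
  split_ifs with hx hy hy
  · exact (Equiv.injective _).ne (hc hxy)
  · exact across hxy hx hy
  · exact (across hxy.symm hy hx).symm
  · exact hc hxy

theorem KempeEquiv.isProperColoring (h : G.KempeEquiv c c') (hc : G.IsProperColoring c) :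
    G.IsProperColoring c' := by
  induction h with
  | refl => exact hc
  | tail _ hstep ih =>
    obtain ⟨a, b, v₀, rfl⟩ := hstep.exists_eq_kempeSwap
    exact ih.kempeSwap

theorem kempeStep_of_eqOn (hc : G.IsProperColoring c) (hc' : G.IsProperColoring c')
    (h : Set.EqOn c c' {v}ᶜ) : G.KempeStep c c' := by
  have hiso : ∀ w, ¬ (G.kempeGraph c (c v) (c' v)).Adj v w := by
    intro w hw
    obtain ⟨hvw, -, hw | hw⟩ := kempeGraph_adj.1 hw
    · exact hc hvw hw.symm
    · exact hc' hvw (h hvw.ne' ▸ hw).symm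
  refine ⟨c v, c' v, v, fun u hu => ?_, fun u hu => ?_⟩
  · obtain rfl := hu.eq_of_forall_not_adj hiso
    simp
  · exact (h fun huv => hu (huv ▸ Reachable.rfl)).symm

theorem kempeEquiv_bot [Finite V] (c c' : V → Fin q) : (⊥ : SimpleGraph V).KempeEquiv c c' := by
  classical
  have := Fintype.ofFinite V
  have hproper : ∀ c : V → Fin q, (⊥ : SimpleGraph V).IsProperColoring c :=
    fun _ _ _ h => h.elim
  suffices ∀ t : Finset V, (⊥ : SimpleGraph V).KempeEquiv c (t.piecewise c' c) by
    simpa using this Finset.univ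
  intro t
  induction t using Finset.induction_on with
  | empty =>
    rw [Finset.piecewise_empty]
    exact .refl
  | insert x t _ ih =>
    refine ih.tail (kempeStep_of_eqOn (v := x) (hproper _) (hproper _) fun u hu => ?_)
    rw [Finset.piecewise_insert, Function.update_of_ne hu]

theorem kempeSwap_deleteIncidenceSet_congr (h : Set.EqOn c c' {v}ᶜ) :
    Set.EqOn ((G.deleteIncidenceSet v).kempeSwap c a b v₀)
      ((G.deleteIncidenceSet v).kempeSwap c' a b v₀) {v}ᶜ := by
  have hK : (G.deleteIncidenceSet v).kempeGraph c a b
      = (G.deleteIncidenceSet v).kempeGraph c' a b := by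
    ext x y
    simp only [kempeGraph_adj, deleteIncidenceSet_adj]
    refine and_congr_right fun ⟨_, hx, hy⟩ => ?_
    rw [h hx, h hy]
  classical
  intro u hu
  simp only [SimpleGraph.kempeSwap, h hu]
  exact if_congr (by rw [hK]) rfl rfl

theorem kempeSwap_deleteIncidenceSet_eqOn (hleaf : ∀ x, (G.kempeGraph c a b).Adj v x → x = w)
    (hv₀ : v₀ ≠ v) :
    Set.EqOn (G.kempeSwap c a b v₀) ((G.deleteIncidenceSet v).kempeSwap c a b v₀) {v}ᶜ := by
  classical
  intro u hu
  refine if_congr ?_ rfl rfl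
  rw [kempeGraph_deleteIncidenceSet, reachable_deleteIncidenceSet_iff_of_forall_adj_eq hleaf hv₀ hu]

theorem kempeSwap_deleteIncidenceSet_self_eqOn :
    Set.EqOn ((G.deleteIncidenceSet v).kempeSwap c a b v) c {v}ᶜ := by
  classical
  intro u hu
  have hiso : ∀ w, ¬ ((G.deleteIncidenceSet v).kempeGraph c a b).Adj v w := fun w hw =>
    (deleteIncidenceSet_adj.1 (kempeGraph_adj.1 hw).1).2.1 rfl
  have hu' : ¬ ((G.deleteIncidenceSet v).kempeGraph c a b).Reachable v u :=
    fun h => hu (h.eq_of_forall_not_adj hiso)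
  simp [kempeSwap, hu']

theorem exists_unused_color_of_kempeGraph_adj [Finite V] (hq : (G.neighborSet v).ncard < q)
    (hc : G.IsProperColoring c) {x y : V} (hx : (G.kempeGraph c a b).Adj v x)
    (hy : (G.kempeGraph c a b).Adj v y) (hxy : x ≠ y) :
    ∃ η, η ≠ a ∧ η ≠ b ∧ ∀ u, G.Adj v u → c u ≠ η := by
  obtain ⟨hvx, hv, hx⟩ := kempeGraph_adj.1 hx
  obtain ⟨hvy, -, hy⟩ := kempeGraph_adj.1 hy
  have hvx' := hc hvx
  have hvy' := hc hvy
  -- `c v`, `c x` and `c y` all lie in `{a, b}`, so `c x = c y` and `{a, b} = {c v, c x}`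
  obtain ⟨η, hηv, hη⟩ := Set.exists_ne_notMem_image_of_ncard_lt (Set.toFinite _) hq hvx hvy hxy
    (show c x = c y by grind) (c v)
  have hηx : η ≠ c x := fun h => hη ⟨x, hvx, h.symm⟩
  exact ⟨η, by grind, by grind, fun u hu h => hη ⟨u, hu, h⟩⟩

theorem exists_kempeEquiv_eqOn_kempeSwap_deleteIncidenceSet [Finite V]
    (hq : (G.neighborSet v).ncard < q) (hc : G.IsProperColoring c) (a b : Fin q) (v₀ : V) :
    ∃ c', G.KempeEquiv c c' ∧ Set.EqOn c' ((G.deleteIncidenceSet v).kempeSwap c a b v₀) {v}ᶜ := by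
  classical
  rcases eq_or_ne v₀ v with rfl | hv₀
  · exact ⟨c, .refl, kempeSwap_deleteIncidenceSet_self_eqOn.symm⟩
  have leaf : ∀ c : V → Fin q, ∀ w, (∀ x, (G.kempeGraph c a b).Adj v x → x = w) →
      ∃ c', G.KempeEquiv c c' ∧ Set.EqOn c' ((G.deleteIncidenceSet v).kempeSwap c a b v₀) {v}ᶜ :=
    fun c _ hleaf => ⟨_, .single kempeStep_kempeSwap, kempeSwap_deleteIncidenceSet_eqOn hleaf hv₀⟩
  by_cases hleaf : ∃ w, ∀ x, (G.kempeGraph c a b).Adj v x → x = w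
  · obtain ⟨w, hw⟩ := hleaf
    exact leaf c w hw
  simp only [not_exists, not_forall] at hleaf
  obtain ⟨x, hx, -⟩ := hleaf v
  obtain ⟨y, hy, hyx⟩ := hleaf x
  obtain ⟨η, hηa, hηb, hη⟩ := exists_unused_color_of_kempeGraph_adj hq hc hx hy (Ne.symm hyx)
  have hupdate : Set.EqOn c (Function.update c v η) {v}ᶜ := fun u hu =>
    (Function.update_of_ne hu _ _).symm
  have hstep := kempeStep_of_eqOn hc (hc.update hη) hupdate
  obtain ⟨c', hc', heq⟩ := leaf (Function.update c v η) v fun x hx => by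
    obtain ⟨-, hv, -⟩ := kempeGraph_adj.1 hx
    simp only [Function.update_self] at hv
    tauto
  exact ⟨c', .head hstep hc', heq.trans (kempeSwap_deleteIncidenceSet_congr hupdate).symm⟩

theorem KempeEquiv.exists_eqOn_of_deleteIncidenceSet [Finite V]
    (hq : (G.neighborSet v).ncard < q) (hc : G.IsProperColoring c)
    (h : (G.deleteIncidenceSet v).KempeEquiv c c') :
    ∃ c'', G.KempeEquiv c c'' ∧ Set.EqOn c'' c' {v}ᶜ := by
  induction h with
  | refl => exact ⟨c, .refl, Set.eqOn_refl _ _⟩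
  | tail _ hstep ih =>
    obtain ⟨c₁, hcc₁, heq⟩ := ih
    obtain ⟨a, b, v₀, rfl⟩ := hstep.exists_eq_kempeSwap
    obtain ⟨c₂, hc₁c₂, heq₂⟩ :=
      exists_kempeEquiv_eqOn_kempeSwap_deleteIncidenceSet hq (hcc₁.isProperColoring hc) a b v₀
    exact ⟨c₂, hcc₁.trans hc₁c₂, heq₂.trans (kempeSwap_deleteIncidenceSet_congr heq)⟩

theorem IsDegenerate.kempeEquiv_of_le [Finite V] {d : ℕ} (hdeg : G.IsDegenerate d) (hq : d < q)
    {c₁ c₂ : V → Fin q} (hHG : H ≤ G) (hc₁ : H.IsProperColoring c₁)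
    (hc₂ : H.IsProperColoring c₂) : H.KempeEquiv c₁ c₂ := by
  induction H using WellFoundedLT.induction generalizing c₁ c₂ with
  | ind H ih =>
  obtain hbot | hsupp := H.support.eq_empty_or_nonempty
  · rw [(support_eq_bot_iff H).1 hbot]
    exact kempeEquiv_bot c₁ c₂
  obtain ⟨v, hv, hvd⟩ := hdeg H.support hsupp
  obtain ⟨w, hvw⟩ := (mem_support H).1 hv
  have hN : (H.neighborSet v).ncard < q := by
    refine (Set.ncard_le_ncard fun u hu => ?_).trans_lt (hvd.trans_lt hq)
    exact ⟨⟨v, hu.symm⟩, hHG hu⟩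
  have hlt : H.deleteIncidenceSet v < H := (deleteIncidenceSet_le H v).lt_of_ne fun h =>
    (deleteIncidenceSet_adj.1 (by rwa [h] : (H.deleteIncidenceSet v).Adj v w)).2.1 rfl
  obtain ⟨c, hc, heq⟩ := (ih _ hlt (hlt.le.trans hHG) (hc₁.mono hlt.le)
    (hc₂.mono hlt.le)).exists_eqOn_of_deleteIncidenceSet hN hc₁
  exact hc.tail (kempeStep_of_eqOn (hc.isProperColoring hc₁) hc₂ heq)

end SimpleGraph

theorem isDegenerate_kempeEquiv {V : Type*} [Finite V]
    (G : SimpleGraph V) (d : ℕ) (hdeg : G.IsDegenerate d) :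
    ∀ q : ℕ, d + 1 ≤ q →
      ∀ c₁ c₂ : V → Fin q, G.IsProperColoring c₁ → G.IsProperColoring c₂ →
        G.KempeEquiv c₁ c₂ :=
  fun _ hq _ _ hc₁ hc₂ => hdeg.kempeEquiv_of_le hq le_rfl hc₁ hc₂
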